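/- arXiv:2001.00696 — 8 statements merged into one kernel-verified Lean document; each statement's English description precedes it below -/
import Mathlib

section
/- Let X be a reflexive Banach space. Then X satisfies the Kadets-Klee property if and only if X is nearly strictly convex and satisfies the property (HS). -/
open Metric Filter Topology NormedSpace

noncomputable section

/-- The face `S(X, f, 0) = {y ∈ B_X : f(y) = 1}` determined by a functional `f`. -/
def face (X : Type*) [NormedAddCommGroup X] [NormedSpace ℝ X] (f : X →L[ℝ] ℝ) : Set X :=
  {y | ‖y‖ ≤ 1 ∧ f y = 1}

/-- Property (HS). -/
def HSProp (X : Type*) [NormedAddCommGroup X] [NormedSpace ℝ X] : Prop :=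
  ∀ f : X →L[ℝ] ℝ, ‖f‖ = 1 → (face X f).Nonempty →
    ∀ xs : ℕ → X, (∀ n, ‖xs n‖ ≤ 1) →
      Tendsto (fun n => f (xs n)) atTop (𝓝 1) →
      Tendsto (fun n => infDist (xs n) (face X f)) atTop (𝓝 0)

/-- Property (HLUR). -/
def HLUR (X : Type*) [NormedAddCommGroup X] [NormedSpace ℝ X] : Prop :=
  ∀ x : X, ‖x‖ = 1 → ∀ xs : ℕ → X, (∀ n, ‖xs n‖ = 1) →
    Tendsto (fun n => ‖xs n + x‖) atTop (𝓝 2) →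
    ∀ f : X →L[ℝ] ℝ, ‖f‖ = 1 → f x = 1 →
      Tendsto (fun n => infDist (xs n) (face X f)) atTop (𝓝 0)

/-- Local uniform rotundity. -/
def LUR (X : Type*) [NormedAddCommGroup X] [NormedSpace ℝ X] : Prop :=
  ∀ x : X, ‖x‖ = 1 → ∀ xs : ℕ → X, (∀ n, ‖xs n‖ = 1) →
    Tendsto (fun n => ‖xs n + x‖) atTop (𝓝 2) → Tendsto xs atTop (𝓝 x)

/-- Compact local uniform rotundity. -/
def CLUR (X : Type*) [NormedAddCommGroup X] [NormedSpace ℝ X] : Prop :=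
  ∀ x : X, ‖x‖ = 1 → ∀ xs : ℕ → X, (∀ n, ‖xs n‖ = 1) →
    Tendsto (fun n => ‖xs n + x‖) atTop (𝓝 2) →
    ∃ φ : ℕ → ℕ, StrictMono φ ∧ ∃ z : X, Tendsto (xs ∘ φ) atTop (𝓝 z)

/-- Local U-convexity. -/
def LocallyUConvex (X : Type*) [NormedAddCommGroup X] [NormedSpace ℝ X] : Prop :=
  ∀ x : X, ‖x‖ = 1 → ∀ xs : ℕ → X, (∀ n, ‖xs n‖ = 1) →
    Tendsto (fun n => ‖xs n + x‖) atTop (𝓝 2) →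
    ∃ f : X →L[ℝ] ℝ, ‖f‖ = 1 ∧ f x = 1 ∧ Tendsto (fun n => f (xs n)) atTop (𝓝 1)

/-- Strong local U-convexity. -/
def StronglyLocallyUConvex (X : Type*) [NormedAddCommGroup X] [NormedSpace ℝ X] : Prop :=
  ∀ x : X, ‖x‖ = 1 → ∀ xs : ℕ → X, (∀ n, ‖xs n‖ = 1) →
    Tendsto (fun n => ‖xs n + x‖) atTop (𝓝 2) →
    ∀ f : X →L[ℝ] ℝ, ‖f‖ = 1 → f x = 1 → Tendsto (fun n => f (xs n)) atTop (𝓝 1)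

/-- Rotundity (strict convexity): every face has at most one element. -/
def Rotund (X : Type*) [NormedAddCommGroup X] [NormedSpace ℝ X] : Prop :=
  ∀ f : X →L[ℝ] ℝ, ‖f‖ = 1 → (face X f).Subsingleton

/-- Near strict convexity: every face is norm-compact. -/
def NSC (X : Type*) [NormedAddCommGroup X] [NormedSpace ℝ X] : Prop :=
  ∀ f : X →L[ℝ] ℝ, ‖f‖ = 1 → IsCompact (face X f)

/-- Kadets-Klee property. -/
def KadetsKlee (X : Type*) [NormedAddCommGroup X] [NormedSpace ℝ X] : Prop :=
  ∀ (xs : ℕ → X) (x : X),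
    (∀ f : X →L[ℝ] ℝ, Tendsto (fun n => f (xs n)) atTop (𝓝 (f x))) →
    Tendsto (fun n => ‖xs n‖) atTop (𝓝 ‖x‖) → Tendsto xs atTop (𝓝 x)

/-- Alternatively convex or smooth. -/
def ACS (X : Type*) [NormedAddCommGroup X] [NormedSpace ℝ X] : Prop :=
  ∀ x y : X, ‖x‖ = 1 → ‖y‖ = 1 → ∀ f : X →L[ℝ] ℝ, ‖f‖ = 1 →
    ‖x + y‖ = 2 → f x = 1 → f y = 1

/-- Smoothness: each unit vector has a unique norming functional. -/
def SmoothSpace (X : Type*) [NormedAddCommGroup X] [NormedSpace ℝ X] : Prop :=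
  ∀ x : X, ‖x‖ = 1 → ∃! f : X →L[ℝ] ℝ, ‖f‖ = 1 ∧ f x = 1

/-- Reflexivity of a normed space. -/
def ReflexiveSpace (X : Type*) [NormedAddCommGroup X] [NormedSpace ℝ X] : Prop :=
  Function.Surjective (inclusionInDoubleDual ℝ X)

/-- Strong rotundity: reflexive, rotund and Kadets-Klee. -/
def StronglyRotund (X : Type*) [NormedAddCommGroup X] [NormedSpace ℝ X] : Prop :=
  ReflexiveSpace X ∧ Rotund X ∧ KadetsKlee X

/-!
In a reflexive space every bounded sequence has a weakly convergent subsequence. To see this,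
pass to the separable closed span of the sequence, on which countably many norm-one functionals
separate points; a diagonal subsequence makes all of them converge, and then all weak limits of
this subsequence along ultrafilters (which exist by reflexivity) coincide.

If `X` is Kadets-Klee, a sequence `xₙ` in the unit ball with `f xₙ → 1` for a norm-one `f`
therefore has a subsequence converging weakly to a point of the face of `f`; its norms tend to
`1`, so it converges in norm. Applied to sequences in the face this gives near strict convexity,
and applied to arbitrary such sequences it gives (HS).

Conversely, if `xₙ ⇀ x ≠ 0` and `‖xₙ‖ → ‖x‖`, rescale `xₙ` into the unit ball and take `f`
norming `x`. By (HS) the rescaled sequence approaches the compact face of `f`, so every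
subsequence has a norm-convergent subsequence, whose limit can only be the weak limit.
-/

theorem tendsto_subseq_of_forall_abs_le {ι : Type*} [Countable ι] (u : ℕ → ι → ℝ) (M : ι → ℝ)
    (hu : ∀ n i, |u n i| ≤ M i) :
    ∃ c : ι → ℝ, ∃ φ : ℕ → ℕ, StrictMono φ ∧ Tendsto (u ∘ φ) atTop (𝓝 c) := by
  have hbox : IsCompact (Set.univ.pi fun i => Set.Icc (-M i) (M i)) :=
    isCompact_univ_pi fun _ => isCompact_Icc
  obtain ⟨c, -, hc⟩ := hbox.isSeqCompact fun n i _ => abs_le.mp (hu n i)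
  exact ⟨c, hc⟩

section

variable {X : Type*} [NormedAddCommGroup X] [NormedSpace ℝ X]

theorem apply_le_norm_of_norm_le_one {f : StrongDual ℝ X} (hf : ‖f‖ ≤ 1) (x : X) :
    f x ≤ ‖x‖ :=
  (le_abs_self _).trans <| (f.le_of_opNorm_le hf x).trans_eq (one_mul _)

theorem norm_eq_one_of_mem_face {f : StrongDual ℝ X} (hf : ‖f‖ ≤ 1) {x : X}
    (hx : x ∈ face X f) : ‖x‖ = 1 :=
  le_antisymm hx.1 (hx.2 ▸ apply_le_norm_of_norm_le_one hf x)

theorem eq_of_tendsto_of_forall_dual_tendsto {ι : Type*} {l : Filter ι} [l.NeBot] {xs : ι → X}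
    {x y : X} (hy : Tendsto xs l (𝓝 y))
    (hx : ∀ f : StrongDual ℝ X, Tendsto (fun i => f (xs i)) l (𝓝 (f x))) : y = x :=
  SeparatingDual.eq_iff_forall_dual_eq.2 fun f =>
    tendsto_nhds_unique ((f.continuous.tendsto y).comp hy) (hx f)

theorem Convex.mem_of_forall_dual_tendsto {s : Set X} (hs : Convex ℝ s) (hsc : IsClosed s)
    {ι : Type*} {l : Filter ι} [l.NeBot] {xs : ι → X} (hxs : ∀ᶠ i in l, xs i ∈ s) {x : X}
    (hx : ∀ f : StrongDual ℝ X, Tendsto (fun i => f (xs i)) l (𝓝 (f x))) : x ∈ s := by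
  by_contra hxs'
  obtain ⟨f, u, hfs, hfx⟩ := geometric_hahn_banach_closed_point hs hsc hxs'
  have : f x ≤ u := le_of_tendsto (hx f) (hxs.mono fun i hi => (hfs _ hi).le)
  linarith

theorem exists_forall_dual_tendsto_ultrafilter (hrefl : ReflexiveSpace X) {ι : Type*}
    (U : Ultrafilter ι) {xs : ι → X} {C : ℝ} (hb : ∀ i, ‖xs i‖ ≤ C) :
    ∃ x : X, ‖x‖ ≤ C ∧ ∀ f : StrongDual ℝ X, Tendsto (fun i => f (xs i)) U (𝓝 (f x)) := by
  have hlim : ∀ f : StrongDual ℝ X, ∃ c ∈ closedBall (0 : ℝ) (C * ‖f‖),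
      Tendsto (fun i => f (xs i)) U (𝓝 c) := by
    intro f
    refine (isCompact_closedBall _ _).ultrafilter_le_nhds (U.map fun i => f (xs i)) ?_
    refine tendsto_principal.2 (Eventually.of_forall fun i => ?_)
    rw [mem_closedBall_zero_iff, mul_comm]
    exact f.le_opNorm_of_le (hb i)
  choose l hl hfl using hlim
  let Λ : StrongDual ℝ X →ₗ[ℝ] ℝ :=
    { toFun := l
      map_add' := fun f g =>
        tendsto_nhds_unique (hfl (f + g)) (by simpa using (hfl f).add (hfl g))
      map_smul' := fun c f =>
        tendsto_nhds_unique (hfl (c • f)) (by simpa using (hfl f).const_mul c) }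
  have hΛ : ∀ f, ‖Λ f‖ ≤ C * ‖f‖ := fun f => mem_closedBall_zero_iff.1 (hl f)
  obtain ⟨x, hx⟩ := hrefl (Λ.mkContinuous C hΛ)
  have hfx : ∀ f : StrongDual ℝ X, f x = Λ f := fun f => by
    simpa using congrArg (fun T : StrongDual ℝ (StrongDual ℝ X) => T f) hx
  obtain ⟨i, -⟩ := (U : Filter ι).nonempty_of_mem univ_mem
  refine ⟨x, norm_le_dual_bound ℝ x ((norm_nonneg _).trans (hb i)) fun f => ?_, fun f => ?_⟩
  · rw [hfx]
    exact hΛ f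
  · rw [hfx]
    exact hfl f

theorem TopologicalSpace.IsSeparable.exists_seq_dual_separating {s : Set X}
    (hs : TopologicalSpace.IsSeparable s) :
    ∃ g : ℕ → StrongDual ℝ X, (∀ j, ‖g j‖ ≤ 1) ∧ ∀ y ∈ s, (∀ j, g j y = 0) → y = 0 := by
  obtain ⟨c, hc, hsc⟩ := hs
  obtain ⟨d, hcd⟩ := Set.countable_iff_exists_subset_range.1 hc
  choose g hg hgd using fun j => exists_dual_vector'' ℝ (d j)
  refine ⟨g, hg, fun y hy hgy => norm_le_zero_iff.1 (le_of_forall_pos_lt_add fun ε hε => ?_)⟩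
  obtain ⟨b, hbc, hyb⟩ := mem_closure_iff.1 (hsc hy) (ε / 2) (half_pos hε)
  obtain ⟨j, rfl⟩ := hcd hbc
  have hdj : ‖d j‖ ≤ ‖y - d j‖ := by
    calc ‖d j‖ = g j (d j - y) := by rw [map_sub, hgy j, sub_zero, hgd j]; rfl
      _ ≤ ‖d j - y‖ := apply_le_norm_of_norm_le_one (hg j) _
      _ = ‖y - d j‖ := norm_sub_rev _ _
  rw [dist_eq_norm] at hyb
  calc ‖y‖ ≤ ‖d j‖ + ‖y - d j‖ := norm_le_insert' y (d j)
    _ < 0 + ε := by linarith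

theorem exists_subseq_forall_dual_tendsto (hrefl : ReflexiveSpace X) {xs : ℕ → X} {C : ℝ}
    (hb : ∀ n, ‖xs n‖ ≤ C) :
    ∃ x : X, ‖x‖ ≤ C ∧ ∃ φ : ℕ → ℕ, StrictMono φ ∧
      ∀ f : StrongDual ℝ X, Tendsto (fun k => f (xs (φ k))) atTop (𝓝 (f x)) := by
  set Y := (Submodule.span ℝ (Set.range xs)).topologicalClosure
  have hxsY : ∀ n, xs n ∈ Y := fun n =>
    Submodule.le_topologicalClosure _ (Submodule.subset_span ⟨n, rfl⟩)
  have hYsep : TopologicalSpace.IsSeparable (Y : Set X) := by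
    rw [Submodule.topologicalClosure_coe]
    exact (Set.countable_range xs).isSeparable.span.closure
  obtain ⟨g, hg, hgY⟩ := hYsep.exists_seq_dual_separating
  obtain ⟨c, φ, hφ, hc⟩ := tendsto_subseq_of_forall_abs_le (fun n j => g j (xs n)) (fun _ => C)
    fun n j => ((g j).le_of_opNorm_le (hg j) (xs n)).trans (by simpa using hb n)
  have hlim : ∀ U : Ultrafilter ℕ, (U : Filter ℕ) ≤ atTop → ∃ x : X, ‖x‖ ≤ C ∧ x ∈ Y ∧
      (∀ j, g j x = c j) ∧ ∀ f : StrongDual ℝ X, Tendsto (fun k => f (xs (φ k))) U (𝓝 (f x)) := by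
    intro U hU
    obtain ⟨x, hxC, hx⟩ := exists_forall_dual_tendsto_ultrafilter hrefl U fun k => hb (φ k)
    refine ⟨x, hxC, ?_, fun j => ?_, hx⟩
    · exact Y.convex.mem_of_forall_dual_tendsto (Submodule.isClosed_topologicalClosure _)
        (Eventually.of_forall fun k => hxsY _) hx
    · exact tendsto_nhds_unique (hx (g j)) ((tendsto_pi_nhds.1 hc j).mono_left hU)
  obtain ⟨x, hxC, hxY, hgx, -⟩ := hlim (Ultrafilter.of atTop) (Ultrafilter.of_le _)
  refine ⟨x, hxC, φ, hφ, fun f => (tendsto_iff_ultrafilter _ _ _).2 fun U hU => ?_⟩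
  obtain ⟨x', -, hx'Y, hgx', hx'⟩ := hlim U hU
  have : x' = x := sub_eq_zero.1 <| hgY _ (Y.sub_mem hx'Y hxY) fun j => by
    rw [map_sub, hgx, hgx', sub_self]
  exact this ▸ hx' f

theorem KadetsKlee.exists_subseq_tendsto_mem_face (hrefl : ReflexiveSpace X)
    (hkk : KadetsKlee X) {f : StrongDual ℝ X} (hf : ‖f‖ ≤ 1) {xs : ℕ → X}
    (hb : ∀ n, ‖xs n‖ ≤ 1) (hfx : Tendsto (fun n => f (xs n)) atTop (𝓝 1)) :
    ∃ a ∈ face X f, ∃ φ : ℕ → ℕ, StrictMono φ ∧ Tendsto (xs ∘ φ) atTop (𝓝 a) := by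
  obtain ⟨a, ha, φ, hφ, hweak⟩ := exists_subseq_forall_dual_tendsto hrefl hb
  have haf : a ∈ face X f := ⟨ha, tendsto_nhds_unique (hweak f) (hfx.comp hφ.tendsto_atTop)⟩
  have hnorm : Tendsto (fun n => ‖xs n‖) atTop (𝓝 1) :=
    tendsto_of_tendsto_of_tendsto_of_le_of_le hfx tendsto_const_nhds
      (fun n => apply_le_norm_of_norm_le_one hf _) hb
  refine ⟨a, haf, φ, hφ, hkk _ a hweak ?_⟩
  rw [norm_eq_one_of_mem_face hf haf]
  exact hnorm.comp hφ.tendsto_atTop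

theorem KadetsKlee.nsc (hrefl : ReflexiveSpace X) (hkk : KadetsKlee X) : NSC X :=
  fun _ hf => IsSeqCompact.isCompact fun _ hys =>
    hkk.exists_subseq_tendsto_mem_face hrefl hf.le (fun n => (hys n).1)
      (tendsto_const_nhds.congr fun n => (hys n).2.symm)

theorem KadetsKlee.hsProp (hrefl : ReflexiveSpace X) (hkk : KadetsKlee X) : HSProp X := by
  intro f hf _ xs hb hfx
  refine tendsto_of_subseq_tendsto fun ns hns => ?_
  obtain ⟨a, ha, φ, -, hφa⟩ :=
    hkk.exists_subseq_tendsto_mem_face hrefl hf.le (fun n => hb (ns n)) (hfx.comp hns)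
  exact ⟨φ, squeeze_zero (fun _ => infDist_nonneg) (fun _ => infDist_le_dist_of_mem ha)
    (tendsto_iff_dist_tendsto_zero.1 hφa)⟩

theorem HSProp.exists_subseq_tendsto_mem_face (hhs : HSProp X) (hnsc : NSC X)
    {f : StrongDual ℝ X} (hf : ‖f‖ = 1) (hne : (face X f).Nonempty) {xs : ℕ → X}
    (hb : ∀ n, ‖xs n‖ ≤ 1) (hfx : Tendsto (fun n => f (xs n)) atTop (𝓝 1)) :
    ∃ a ∈ face X f, ∃ φ : ℕ → ℕ, StrictMono φ ∧ Tendsto (xs ∘ φ) atTop (𝓝 a) := by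
  have hF := hnsc f hf
  choose w hwF hw using fun n => hF.exists_infDist_eq_dist hne (xs n)
  obtain ⟨a, ha, φ, hφ, hwa⟩ := hF.tendsto_subseq hwF
  have hdist : Tendsto (fun n => dist (w n) (xs n)) atTop (𝓝 0) := by
    simpa only [dist_comm, ← hw] using hhs f hf hne xs hb hfx
  exact ⟨a, ha, φ, hφ, hwa.congr_dist (hdist.comp hφ.tendsto_atTop)⟩

theorem KadetsKlee.of_nsc_of_hsProp (hnsc : NSC X) (hhs : HSProp X) : KadetsKlee X := by
  intro xs x hweak hnorm
  rcases eq_or_ne x 0 with rfl | hx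
  · exact tendsto_zero_iff_norm_tendsto_zero.2 (by simpa using hnorm)
  obtain ⟨f, hf, hfx⟩ := exists_dual_vector ℝ x (norm_ne_zero_iff.2 hx)
  replace hfx : f x = ‖x‖ := hfx
  have hx₀ : 0 < ‖x‖ := norm_pos_iff.2 hx
  set m : ℕ → ℝ := fun n => max ‖xs n‖ ‖x‖
  have hm₀ : ∀ n, 0 < m n := fun n => hx₀.trans_le (le_max_right _ _)
  have hm : Tendsto m atTop (𝓝 ‖x‖) := by
    simpa using hnorm.max (tendsto_const_nhds (x := ‖x‖))
  set z : ℕ → X := fun n => (m n)⁻¹ • xs n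
  have hz : ∀ n, ‖z n‖ ≤ 1 := fun n => by
    rw [norm_smul, norm_inv, Real.norm_of_nonneg (hm₀ n).le, inv_mul_le_one₀ (hm₀ n)]
    exact le_max_left _ _
  have hfz : Tendsto (fun n => f (z n)) atTop (𝓝 1) := by
    have := (hm.inv₀ hx₀.ne').mul (hweak f)
    rw [hfx, inv_mul_cancel₀ hx₀.ne'] at this
    exact this.congr fun n => (f.map_smul _ _).symm
  have hne : (face X f).Nonempty := by
    refine ⟨‖x‖⁻¹ • x, ?_, ?_⟩
    · rw [norm_smul, norm_inv, norm_norm, inv_mul_cancel₀ hx₀.ne']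
    · rw [map_smul, hfx, smul_eq_mul, inv_mul_cancel₀ hx₀.ne']
  refine tendsto_of_subseq_tendsto fun ns hns => ?_
  obtain ⟨a, -, φ, hφ, hza⟩ := hhs.exists_subseq_tendsto_mem_face hnsc hf hne
    (fun n => hz (ns n)) (hfz.comp hns)
  have hnsφ := hns.comp hφ.tendsto_atTop
  have hxs : Tendsto (fun k => xs (ns (φ k))) atTop (𝓝 (‖x‖ • a)) := by
    refine ((hm.comp hnsφ).smul hza).congr fun k => ?_
    exact smul_inv_smul₀ (hm₀ _).ne' _
  have hxa : ‖x‖ • a = x :=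
    eq_of_tendsto_of_forall_dual_tendsto hxs fun g => (hweak g).comp hnsφ
  exact ⟨φ, hxa ▸ hxs⟩

end

theorem kk_iff_nsc_and_hs_general (X : Type*) [NormedAddCommGroup X] [NormedSpace ℝ X]
    (hrefl : ReflexiveSpace X) :
    KadetsKlee X ↔ NSC X ∧ HSProp X :=
  ⟨fun hkk => ⟨hkk.nsc hrefl, hkk.hsProp hrefl⟩, fun h => .of_nsc_of_hsProp h.1 h.2⟩

theorem kk_iff_nsc_and_hs (X : Type*) [NormedAddCommGroup X] [NormedSpace ℝ X]
    [CompleteSpace X] (hrefl : ReflexiveSpace X) :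
    KadetsKlee X ↔ NSC X ∧ HSProp X :=
  kk_iff_nsc_and_hs_general X hrefl
end
end

section
/- A Banach space X is HLUR if and only if for every x ∈ S_X, the sets D[x,1/n] = {y ∈ B_X : ‖(x+y)/2‖ ≥ 1 - 1/n} converge in the Hausdorff sense to A_0(x) = ∪{S(X,x*,0) : x* ∈ J(x)}, and S(X,x*,0) is the same for all x* ∈ J(x). -/
open Metric Filter Topology NormedSpace Pointwise

noncomputable section

/-- The set `D[x, δ] = {y ∈ B_X : ‖(x+y)/2‖ ≥ 1 - δ}`. -/
def Dset (X : Type*) [NormedAddCommGroup X] [NormedSpace ℝ X] (x : X) (δ : ℝ) : Set X :=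
  {y | ‖y‖ ≤ 1 ∧ 1 - δ ≤ ‖(2 : ℝ)⁻¹ • (x + y)‖}

/-- `A₀(x)`, the union of the faces determined by the norming functionals of `x`. -/
def A0 (X : Type*) [NormedAddCommGroup X] [NormedSpace ℝ X] (x : X) : Set X :=
  {y | ∃ f : X →L[ℝ] ℝ, ‖f‖ = 1 ∧ f x = 1 ∧ y ∈ face X f}

/-- Convergence of a sequence of sets to a set in the Hausdorff sense. -/
def HausdorffTendsto (X : Type*) [NormedAddCommGroup X] [NormedSpace ℝ X]
    (C : ℕ → Set X) (C₀ : Set X) : Prop :=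
  ∀ ε > (0 : ℝ),
    (∀ᶠ n in atTop, C n ⊆ C₀ + closedBall (0 : X) ε) ∧
    (∀ᶠ n in atTop, C₀ ⊆ C n + closedBall (0 : X) ε)

/-! Every `y` in a face `S(f)` with `f ∈ J(x)` satisfies `‖y + x‖ = 2`, so HLUR applied to the
constant sequence `y` puts `y` in the closed set `S(g)` for every `g ∈ J(x)`: all these faces
coincide and `A₀(x)` is their common value. Since `A₀(x) ⊆ D[x, δ]` for every `δ ≥ 0`, Hausdorff
convergence reduces to its upper half, which is equivalent to the sequential statement
"`‖yₙ‖ ≤ 1` and `‖yₙ + x‖ → 2` imply `d(yₙ, A₀(x)) → 0`". That is HLUR once the `yₙ`, whose norms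
tend to `1`, are pushed radially onto the unit sphere. -/

section NormedGroup

variable {E : Type*} [SeminormedAddCommGroup E]

lemma infDist_le_of_mem_add_closedBall {C : Set E} {y : E} {r : ℝ}
    (hy : y ∈ C + closedBall (0 : E) r) : infDist y C ≤ r := by
  obtain ⟨c, hc, b, hb, rfl⟩ := hy
  calc infDist (c + b) C ≤ dist (c + b) c := infDist_le_dist_of_mem hc
    _ ≤ r := by rwa [dist_eq_norm, add_sub_cancel_left, ← mem_closedBall_zero_iff]

lemma mem_add_closedBall_of_infDist_lt {C : Set E} (hC : C.Nonempty) {y : E} {r : ℝ}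
    (hy : infDist y C < r) : y ∈ C + closedBall (0 : E) r := by
  rw [← mem_thickening_iff_infDist_lt hC, ← add_ball_zero] at hy
  exact Set.add_subset_add_left ball_subset_closedBall hy

lemma tendsto_norm_of_tendsto_norm_add {x : E} (hx : ‖x‖ ≤ 1) {ys : ℕ → E}
    (hys : ∀ n, ‖ys n‖ ≤ 1) (hlim : Tendsto (fun n => ‖ys n + x‖) atTop (𝓝 2)) :
    Tendsto (fun n => ‖ys n‖) atTop (𝓝 1) := by
  refine tendsto_of_tendsto_of_tendsto_of_le_of_le (g := fun n => ‖ys n + x‖ - 1)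
    (by convert hlim.sub_const 1; norm_num) tendsto_const_nhds (fun n => ?_) hys
  linarith [norm_add_le (ys n) x]

end NormedGroup

section NormedSpace

variable {X : Type*} [NormedAddCommGroup X] [NormedSpace ℝ X]

lemma isClosed_face (f : X →L[ℝ] ℝ) : IsClosed (face X f) :=
  (isClosed_le continuous_norm continuous_const).inter (isClosed_singleton.preimage f.continuous)

lemma apply_le_norm_of_opNorm_le_one {f : X →L[ℝ] ℝ} (hf : ‖f‖ ≤ 1) (z : X) : f z ≤ ‖z‖ :=
  calc f z ≤ ‖f‖ * ‖z‖ := (le_abs_self _).trans (f.le_opNorm z)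
    _ ≤ ‖z‖ := mul_le_of_le_one_left (norm_nonneg z) hf

lemma norm_eq_one_of_mem_face_s7 {f : X →L[ℝ] ℝ} (hf : ‖f‖ ≤ 1) {y : X} (hy : y ∈ face X f) :
    ‖y‖ = 1 :=
  le_antisymm hy.1 (hy.2 ▸ apply_le_norm_of_opNorm_le_one hf y)

lemma two_le_norm_add_of_mem_face {f : X →L[ℝ] ℝ} (hf : ‖f‖ ≤ 1) {x y : X} (hfx : f x = 1)
    (hy : y ∈ face X f) : 2 ≤ ‖y + x‖ :=
  calc (2 : ℝ) = f (y + x) := by rw [map_add, hfx, hy.2]; norm_num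
    _ ≤ ‖y + x‖ := apply_le_norm_of_opNorm_le_one hf _

lemma norm_add_eq_two_of_mem_face {f : X →L[ℝ] ℝ} (hf : ‖f‖ ≤ 1) {x y : X}
    (hx : x ∈ face X f) (hy : y ∈ face X f) : ‖y + x‖ = 2 :=
  le_antisymm ((norm_add_le y x).trans (by linarith [hx.1, hy.1]))
    (two_le_norm_add_of_mem_face hf hx.2 hy)

lemma exists_norming_functional {x : X} (hx : ‖x‖ = 1) :
    ∃ f : X →L[ℝ] ℝ, ‖f‖ = 1 ∧ f x = 1 := by
  obtain ⟨f, hf, hfx⟩ := exists_dual_vector ℝ x (norm_ne_zero_iff.mp (by rw [hx]; norm_num))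
  exact ⟨f, hf, by rw [hfx, hx]; rfl⟩

lemma A0_eq_face {x : X}
    (hfaces : ∀ f g : X →L[ℝ] ℝ, ‖f‖ = 1 → f x = 1 → ‖g‖ = 1 → g x = 1 → face X f = face X g)
    {f : X →L[ℝ] ℝ} (hf : ‖f‖ = 1) (hfx : f x = 1) : A0 X x = face X f := by
  ext y
  constructor
  · rintro ⟨g, hg, hgx, hy⟩
    rwa [hfaces g f hg hgx hf hfx] at hy
  · exact fun hy => ⟨f, hf, hfx, hy⟩

lemma mem_Dset_iff {x y : X} {δ : ℝ} : y ∈ Dset X x δ ↔ ‖y‖ ≤ 1 ∧ 2 - 2 * δ ≤ ‖y + x‖ := by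
  have h : ‖(2 : ℝ)⁻¹ • (x + y)‖ = ‖y + x‖ / 2 := by
    rw [norm_smul, add_comm]; norm_num; ring
  simp only [Dset, Set.mem_ofPred_eq, h]
  constructor <;> rintro ⟨hy, hδ⟩ <;> exact ⟨hy, by linarith⟩

lemma A0_subset_Dset (x : X) {δ : ℝ} (hδ : 0 ≤ δ) : A0 X x ⊆ Dset X x δ := by
  rintro y ⟨f, hf, hfx, hy⟩
  exact mem_Dset_iff.2 ⟨hy.1, by linarith [two_le_norm_add_of_mem_face hf.le hfx hy]⟩

lemma exists_norm_eq_one_norm_sub_eq {u : X} (hu : ‖u‖ = 1) {y : X} (hy : ‖y‖ ≤ 1) :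
    ∃ z : X, ‖z‖ = 1 ∧ ‖z - y‖ = 1 - ‖y‖ := by
  rcases eq_or_ne y 0 with rfl | hy0
  · exact ⟨u, hu, by simp [hu]⟩
  have hpos : 0 < ‖y‖ := norm_pos_iff.mpr hy0
  refine ⟨‖y‖⁻¹ • y, by rw [norm_smul, norm_inv, norm_norm, inv_mul_cancel₀ hpos.ne'], ?_⟩
  have hsub : ‖y‖⁻¹ • y - y = (‖y‖⁻¹ - 1) • y := by rw [sub_smul, one_smul]
  rw [hsub, norm_smul, Real.norm_of_nonneg (sub_nonneg.2 ((one_le_inv₀ hpos).2 hy)), sub_mul,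
    inv_mul_cancel₀ hpos.ne', one_mul]

lemma tendsto_norm_add_of_mem_Dset {x : X} (hx : ‖x‖ ≤ 1) {ys : ℕ → X} {δ : ℕ → ℝ}
    (hδ : Tendsto δ atTop (𝓝 0)) (hys : ∀ n, ys n ∈ Dset X x (δ n)) :
    Tendsto (fun n => ‖ys n + x‖) atTop (𝓝 2) := by
  refine tendsto_of_tendsto_of_tendsto_of_le_of_le (g := fun n => 2 - 2 * δ n)
    (by simpa using (hδ.const_mul 2).const_sub 2) tendsto_const_nhds
    (fun n => (mem_Dset_iff.1 (hys n)).2) (fun n => ?_)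
  linarith [norm_add_le (ys n) x, (mem_Dset_iff.1 (hys n)).1]

lemma eventually_Dset_subset_iff {x : X} (hx : ‖x‖ ≤ 1) {C : Set X} (hC : C.Nonempty) :
    (∀ ε > 0, ∀ᶠ n : ℕ in atTop, Dset X x (1 / n) ⊆ C + closedBall (0 : X) ε) ↔
      ∀ ys : ℕ → X, (∀ n, ‖ys n‖ ≤ 1) → Tendsto (fun n => ‖ys n + x‖) atTop (𝓝 2) →
        Tendsto (fun n => infDist (ys n) C) atTop (𝓝 0) := by
  constructor
  · intro hD ys hys hlim
    refine tendsto_order.2 ⟨fun a ha => Eventually.of_forall fun n => ha.trans_le infDist_nonneg,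
      fun ε hε => ?_⟩
    obtain ⟨N, hN, hN1⟩ := ((hD (ε / 2) (by positivity)).and (eventually_ge_atTop 1)).exists
    have hNpos : (0 : ℝ) < 1 / N := by positivity
    filter_upwards [hlim.eventually (lt_mem_nhds (by linarith : 2 - 2 * (1 / (N : ℝ)) < 2))]
      with n hn
    have hmem : ys n ∈ Dset X x (1 / N) := mem_Dset_iff.2 ⟨hys n, hn.le⟩
    linarith [infDist_le_of_mem_add_closedBall (hN hmem)]
  · intro hseq ε hε
    by_contra hne
    obtain ⟨φ, hφ, hfail⟩ := extraction_of_frequently_atTop (not_eventually.1 hne)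
    choose ys hysD hysC using fun k => Set.not_subset.1 (hfail k)
    have hδ : Tendsto (fun k => 1 / (φ k : ℝ)) atTop (𝓝 0) :=
      tendsto_one_div_atTop_nhds_zero_nat.comp hφ.tendsto_atTop
    have hdist := hseq ys (fun k => (mem_Dset_iff.1 (hysD k)).1)
      (tendsto_norm_add_of_mem_Dset hx hδ hysD)
    obtain ⟨k, hk⟩ := (hdist.eventually (gt_mem_nhds hε)).exists
    exact hysC k (mem_add_closedBall_of_infDist_lt hC hk)

lemma HLUR.face_subset_face (h : HLUR X) {x : X} (hx : ‖x‖ = 1) {f g : X →L[ℝ] ℝ}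
    (hf : ‖f‖ = 1) (hfx : f x = 1) (hg : ‖g‖ = 1) (hgx : g x = 1) : face X f ⊆ face X g := by
  intro y hy
  have hxy : ‖y + x‖ = 2 := norm_add_eq_two_of_mem_face hf.le ⟨hx.le, hfx⟩ hy
  have hlim := h x hx (fun _ => y) (fun _ => norm_eq_one_of_mem_face_s7 hf.le hy)
    (by simp only [hxy]; exact tendsto_const_nhds) g hg hgx
  exact ((isClosed_face g).mem_iff_infDist_zero ⟨x, hx.le, hgx⟩).2
    (tendsto_nhds_unique tendsto_const_nhds hlim)

lemma HLUR.tendsto_infDist_face (h : HLUR X) {x : X} (hx : ‖x‖ = 1) {f : X →L[ℝ] ℝ}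
    (hf : ‖f‖ = 1) (hfx : f x = 1) {ys : ℕ → X} (hys : ∀ n, ‖ys n‖ ≤ 1)
    (hlim : Tendsto (fun n => ‖ys n + x‖) atTop (𝓝 2)) :
    Tendsto (fun n => infDist (ys n) (face X f)) atTop (𝓝 0) := by
  choose zs hzs hzys using fun n => exists_norm_eq_one_norm_sub_eq hx (hys n)
  have hgap : Tendsto (fun n => ‖zs n - ys n‖) atTop (𝓝 0) := by
    simpa [hzys] using (tendsto_norm_of_tendsto_norm_add hx.le hys hlim).const_sub 1
  have hzlim : Tendsto (fun n => ‖zs n + x‖) atTop (𝓝 2) := by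
    refine hlim.congr_dist (squeeze_zero (fun _ => dist_nonneg) (fun n => ?_) hgap)
    calc dist ‖ys n + x‖ ‖zs n + x‖ ≤ ‖(zs n + x) - (ys n + x)‖ := by
          rw [dist_comm]; exact abs_norm_sub_norm_le _ _
      _ = ‖zs n - ys n‖ := by rw [add_sub_add_right_eq_sub]
  have hzface := h x hx zs hzs hzlim f hf hfx
  refine squeeze_zero (fun _ => infDist_nonneg) (fun n => ?_) (by simpa using hzface.add hgap)
  calc infDist (ys n) (face X f) ≤ infDist (zs n) (face X f) + dist (ys n) (zs n) :=
        infDist_le_infDist_add_dist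
    _ = infDist (zs n) (face X f) + ‖zs n - ys n‖ := by rw [dist_comm, dist_eq_norm]

end NormedSpace

theorem hlur_iff_hausdorff_general (X : Type*) [NormedAddCommGroup X] [NormedSpace ℝ X] :
    HLUR X ↔ ∀ x : X, ‖x‖ = 1 →
      HausdorffTendsto X (fun n : ℕ => Dset X x (1 / n)) (A0 X x) ∧
      (∀ f g : X →L[ℝ] ℝ, ‖f‖ = 1 → f x = 1 → ‖g‖ = 1 → g x = 1 →
        face X f = face X g) := by
  constructor
  · intro h x hx
    have hfaces : ∀ f g : X →L[ℝ] ℝ, ‖f‖ = 1 → f x = 1 → ‖g‖ = 1 → g x = 1 →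
        face X f = face X g := fun f g hf hfx hg hgx =>
      (h.face_subset_face hx hf hfx hg hgx).antisymm (h.face_subset_face hx hg hgx hf hfx)
    obtain ⟨f, hf, hfx⟩ := exists_norming_functional hx
    have hne : (face X f).Nonempty := ⟨x, hx.le, hfx⟩
    have hupper := (eventually_Dset_subset_iff hx.le hne).2
      fun ys hys hlim => h.tendsto_infDist_face hx hf hfx hys hlim
    refine ⟨fun ε hε => ⟨?_, ?_⟩, hfaces⟩
    · rw [A0_eq_face hfaces hf hfx]
      exact hupper ε hε
    · exact Eventually.of_forall fun _ => (A0_subset_Dset x (by positivity)).trans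
        (Set.subset_add_left _ (mem_closedBall_self hε.le))
  · intro h x hx xs hxs hlim f hf hfx
    obtain ⟨hD, hfaces⟩ := h x hx
    have hne : (face X f).Nonempty := ⟨x, hx.le, hfx⟩
    rw [A0_eq_face hfaces hf hfx] at hD
    exact (eventually_Dset_subset_iff hx.le hne).1 (fun ε hε => (hD ε hε).1)
      xs (fun n => (hxs n).le) hlim

theorem hlur_iff_hausdorff (X : Type*) [NormedAddCommGroup X] [NormedSpace ℝ X]
    [CompleteSpace X] :
    HLUR X ↔ ∀ x : X, ‖x‖ = 1 →
      HausdorffTendsto X (fun n : ℕ => Dset X x (1 / n)) (A0 X x) ∧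
      (∀ f g : X →L[ℝ] ℝ, ‖f‖ = 1 → f x = 1 → ‖g‖ = 1 → g x = 1 →
        face X f = face X g) :=
  hlur_iff_hausdorff_general X
end
end

section
/- Let X be a reflexive Banach space such that both X and its dual X* are smooth and satisfy the property (HS). Then X is HLUR. -/
open Metric Filter Topology NormedSpace

noncomputable section

theorem hlur_of_smooth_hs_dual (X : Type*) [NormedAddCommGroup X] [NormedSpace ℝ X]
    [CompleteSpace X] (hrefl : ReflexiveSpace X)
    (hsm : SmoothSpace X) (hsm' : SmoothSpace (StrongDual ℝ X))
    (hhs : HSProp X) (hhs' : HSProp (StrongDual ℝ X)) :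
    HLUR X := by
  intro x hx xs hxs hsum f hf hfx
  -- norming functionals for xs n + x
  classical
  have hne : ∀ᶠ n in atTop, xs n + x ≠ 0 := by
    have h1 : ∀ᶠ n in atTop, (1:ℝ) < ‖xs n + x‖ :=
      hsum.eventually (eventually_gt_nhds (by norm_num))
    filter_upwards [h1] with n hn h0
    rw [h0, norm_zero] at hn; linarith
  set g : ℕ → StrongDual ℝ X := fun n =>
    if h : xs n + x = 0 then f else (exists_dual_vector ℝ _ (norm_ne_zero_iff.mpr h)).choose with hg
  have hgnorm : ∀ n, ‖g n‖ = 1 := by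
    intro n
    simp only [hg]
    split
    · exact hf
    · exact (exists_dual_vector ℝ _ (norm_ne_zero_iff.mpr ‹_›)).choose_spec.1
  have hgval : ∀ᶠ n in atTop, g n (xs n + x) = ‖xs n + x‖ := by
    filter_upwards [hne] with n hn
    simp only [hg, dif_neg hn]
    exact (exists_dual_vector ℝ _ (norm_ne_zero_iff.mpr hn)).choose_spec.2
  have habs : ∀ (h : StrongDual ℝ X) (y : X), ‖h‖ = 1 → ‖y‖ = 1 → h y ≤ 1 := by
    intro h y h1 h2
    calc h y ≤ ‖h y‖ := le_abs_self _
    _ ≤ ‖h‖ * ‖y‖ := h.le_opNorm y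
    _ = 1 := by rw [h1, h2, mul_one]
  have hlow : ∀ᶠ n in atTop, ‖xs n + x‖ - 1 ≤ g n x ∧ ‖xs n + x‖ - 1 ≤ g n (xs n) := by
    filter_upwards [hgval] with n hn
    have := (g n).map_add (xs n) x
    rw [hn] at this
    constructor
    · have := habs (g n) (xs n) (hgnorm n) (hxs n); linarith
    · have := habs (g n) x (hgnorm n) hx; linarith
  have hsub : Tendsto (fun n => ‖xs n + x‖ - 1) atTop (𝓝 1) := by
    have := hsum.sub_const 1
    norm_num at this
    exact this
  -- g n x → 1
  have hgx : Tendsto (fun n => g n x) atTop (𝓝 1) := by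
    refine tendsto_of_tendsto_of_tendsto_of_le_of_le' hsub tendsto_const_nhds
      (hlow.mono fun n h => h.1) (Eventually.of_forall fun n => habs (g n) x (hgnorm n) hx)
  -- the face of x̂ in the dual is {f}
  have hxhat : ‖inclusionInDoubleDual ℝ X x‖ = 1 := by
    rw [show inclusionInDoubleDual ℝ X x = inclusionInDoubleDualLi ℝ x from rfl,
      (inclusionInDoubleDualLi ℝ).norm_map, hx]
  have hface : face (StrongDual ℝ X) (inclusionInDoubleDual ℝ X x) = {f} := by
    ext h
    simp only [face, Set.mem_setOf_eq, Set.mem_singleton_iff, dual_def]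
    constructor
    · rintro ⟨h1, h2⟩
      have hnorm : ‖h‖ = 1 := by
        refine le_antisymm h1 ?_
        calc (1:ℝ) = h x := h2.symm
        _ ≤ ‖h x‖ := le_abs_self _
        _ ≤ ‖h‖ * ‖x‖ := h.le_opNorm x
        _ = ‖h‖ := by rw [hx, mul_one]
      obtain ⟨f₀, hf₀, huniq⟩ := hsm x hx
      rw [huniq h ⟨hnorm, h2⟩, huniq f ⟨hf, hfx⟩]
    · rintro rfl
      exact ⟨le_of_eq hf, hfx⟩
  -- apply HS in the dual to get g n → f
  have hgf : Tendsto (fun n => dist (g n) f) atTop (𝓝 0) := by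
    have := hhs' (inclusionInDoubleDual ℝ X x) hxhat
      (hface ▸ Set.singleton_nonempty f) g (fun n => le_of_eq (hgnorm n))
      (by simpa only [dual_def] using hgx)
    simpa only [hface, Metric.infDist_singleton] using this
  -- g n (xs n) → 1
  have hgxs : Tendsto (fun n => g n (xs n)) atTop (𝓝 1) :=
    tendsto_of_tendsto_of_tendsto_of_le_of_le' hsub tendsto_const_nhds
      (hlow.mono fun n h => h.2)
      (Eventually.of_forall fun n => habs (g n) (xs n) (hgnorm n) (hxs n))
  -- f (xs n) → 1
  have hfxs : Tendsto (fun n => f (xs n)) atTop (𝓝 1) := by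
    have hdiff : Tendsto (fun n => f (xs n) - g n (xs n)) atTop (𝓝 0) := by
      refine squeeze_zero_norm (fun n => ?_) hgf
      calc ‖f (xs n) - g n (xs n)‖ = ‖(f - g n) (xs n)‖ := by simp
      _ ≤ ‖f - g n‖ * ‖xs n‖ := (f - g n).le_opNorm _
      _ = dist (g n) f := by rw [hxs n, mul_one, dist_comm, dist_eq_norm]
    have h2 := hdiff.add hgxs
    norm_num at h2
    simpa using h2
  -- apply HS in X
  exact hhs f hf ⟨x, le_of_eq hx, hfx⟩ xs (fun n => le_of_eq (hxs n)) hfxs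
end
end

section
/- If X and X* are both strongly rotund Banach spaces, then both X and X* are LUR. -/
open Metric Filter Topology NormedSpace

noncomputable section

section Aux

variable {E : Type*} [NormedAddCommGroup E] [NormedSpace ℝ E]

lemma norm_inclusionJ (x : E) : ‖inclusionInDoubleDual ℝ E x‖ = ‖x‖ :=
  (inclusionInDoubleDualLi ℝ (E := E)).norm_map x

lemma mapClusterPt_eq_of_tendsto {α Y : Type*} [TopologicalSpace Y] [T2Space Y] {F : Filter α}
    {u : α → Y} {a b : Y} (h : MapClusterPt a F u) (h' : Tendsto u F (𝓝 b)) : a = b :=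
  eq_of_nhds_neBot (h.clusterPt.mono h')

lemma tendsto_one_of_sum {a b : ℕ → ℝ} (ha : ∀ n, a n ≤ 1) (hb : ∀ n, b n ≤ 1)
    (h : Tendsto (fun n => a n + b n) atTop (𝓝 2)) : Tendsto a atTop (𝓝 1) := by
  have h2 := h.sub_const 1
  rw [show (2:ℝ) - 1 = 1 by norm_num] at h2
  exact tendsto_of_tendsto_of_tendsto_of_le_of_le h2 tendsto_const_nhds
    (fun n => by have := hb n; simp only; linarith) fun n => ha n

lemma apply_le_one_of_le {f : E →L[ℝ] ℝ} {y : E} (hf : ‖f‖ ≤ 1) (hy : ‖y‖ ≤ 1) : f y ≤ 1 := by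
  have h1 : ‖f y‖ ≤ ‖f‖ * ‖y‖ := f.le_opNorm y
  have h2 : ‖f‖ * ‖y‖ ≤ 1 := by
    have h0 : (0:ℝ) ≤ ‖f‖ := norm_nonneg _
    nlinarith
  calc f y ≤ |f y| := le_abs_self _
    _ = ‖f y‖ := (Real.norm_eq_abs _).symm
    _ ≤ 1 := h1.trans h2

/-- Key weak-* convergence lemma: a sequence in the dual unit ball whose values at `x`
tend to `1` converges pointwise to the unique functional `g` with `‖g‖ ≤ 1`, `g x = 1`. -/
lemma weakStar_tendsto (x : E) (g : StrongDual ℝ E)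
    (huniq : ∀ h : StrongDual ℝ E, ‖h‖ ≤ 1 → h x = 1 → h = g)
    (gs : ℕ → StrongDual ℝ E) (hb : ∀ n, ‖gs n‖ ≤ 1)
    (h1 : Tendsto (fun n => gs n x) atTop (𝓝 1)) :
    ∀ y : E, Tendsto (fun n => gs n y) atTop (𝓝 (g y)) := by
  set K : Set (WeakDual ℝ E) := WeakDual.toStrongDual ⁻¹' closedBall 0 1 with hKdef
  have hKc : IsCompact K := WeakDual.isCompact_closedBall (𝕜 := ℝ) 0 1
  set v : ℕ → WeakDual ℝ E := fun n => StrongDual.toWeakDual (gs n) with hvdef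
  have hvK : ∀ n, v n ∈ K := by
    intro n
    show WeakDual.toStrongDual (v n) ∈ closedBall 0 1
    rw [mem_closedBall_zero_iff]
    exact hb n
  have hcl : ∀ w ∈ K, MapClusterPt w atTop v → w = StrongDual.toWeakDual g := by
    intro w hw hcw
    have hwx : MapClusterPt (w x) atTop fun n => v n x :=
      hcw.continuousAt_comp (WeakDual.eval_continuous x).continuousAt
    have hx1 : w x = 1 := mapClusterPt_eq_of_tendsto hwx h1
    have hwn : ‖WeakDual.toStrongDual w‖ ≤ 1 := mem_closedBall_zero_iff.mp hw
    have := huniq (WeakDual.toStrongDual w) hwn hx1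
    calc w = StrongDual.toWeakDual (WeakDual.toStrongDual w) := rfl
      _ = StrongDual.toWeakDual g := by rw [this]
  have hconv : Tendsto v atTop (𝓝 (StrongDual.toWeakDual g)) :=
    hKc.tendsto_nhds_of_unique_mapClusterPt (Eventually.of_forall hvK) hcl
  intro y
  exact ((WeakDual.eval_continuous y).continuousAt.tendsto).comp hconv

end Aux

section Main

variable {X : Type*} [NormedAddCommGroup X] [NormedSpace ℝ X]

set_option maxHeartbeats 1000000 in
lemma exists_face_elem (hrefl : Function.Surjective (inclusionInDoubleDual ℝ X))
    (f : StrongDual ℝ X) (hf : ‖f‖ = 1) : ∃ x : X, x ∈ face X f := by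
  have hseq : ∀ n : ℕ, ∃ y : X, ‖y‖ ≤ 1 ∧ 1 - 1/(n+1) < f y := by
    intro n
    have hpos : (0:ℝ) < 1/((n:ℝ)+1) := by positivity
    have h1 : (1:ℝ) - 1/(n+1) < ‖f‖ := by rw [hf]; linarith
    obtain ⟨y, hy, hfy⟩ := f.exists_lt_apply_of_lt_opNorm h1
    rcases le_or_gt 0 (f y) with h | h
    · exact ⟨y, hy.le, by rwa [Real.norm_eq_abs, abs_of_nonneg h] at hfy⟩
    · refine ⟨-y, by simpa using hy.le, ?_⟩
      rw [map_neg]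
      rwa [Real.norm_eq_abs, abs_of_neg h] at hfy
  choose xs hxs1 hxs2 using hseq
  have hft : Tendsto (fun n => f (xs n)) atTop (𝓝 1) := by
    have hlow : Tendsto (fun n : ℕ => 1 - 1/((n:ℝ)+1)) atTop (𝓝 1) := by
      have := (tendsto_const_nhds (x := (1:ℝ)) (f := atTop (α := ℕ))).sub
        tendsto_one_div_add_atTop_nhds_zero_nat
      simpa using this
    exact tendsto_of_tendsto_of_tendsto_of_le_of_le hlow tendsto_const_nhds
      (fun n => (hxs2 n).le) fun n => apply_le_one_of_le hf.le (hxs1 n)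
  set K : Set (WeakDual ℝ (StrongDual ℝ X)) := WeakDual.toStrongDual ⁻¹' closedBall 0 1 with hKdef
  have hKc : IsCompact K := WeakDual.isCompact_closedBall (𝕜 := ℝ) 0 1
  set v : ℕ → WeakDual ℝ (StrongDual ℝ X) :=
    fun n => StrongDual.toWeakDual (inclusionInDoubleDual ℝ X (xs n)) with hvdef
  have hvK : ∀ n, v n ∈ K := by
    intro n
    show WeakDual.toStrongDual (v n) ∈ closedBall 0 1
    rw [mem_closedBall_zero_iff (E := StrongDual ℝ (StrongDual ℝ X))]
    show ‖inclusionInDoubleDual ℝ X (xs n)‖ ≤ 1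
    rw [norm_inclusionJ]
    exact hxs1 n
  obtain ⟨w, hwK, hcw⟩ := hKc.exists_mapClusterPt (f := atTop) (u := v)
    (Filter.le_principal_iff.2 (Filter.eventually_map.2 (Eventually.of_forall hvK)))
  have hwf : MapClusterPt (w f) atTop fun n => v n f :=
    hcw.continuousAt_comp (WeakDual.eval_continuous f).continuousAt
  have hwf1 : w f = 1 := mapClusterPt_eq_of_tendsto hwf hft
  obtain ⟨z, hz⟩ := hrefl (WeakDual.toStrongDual w)
  refine ⟨z, ?_, ?_⟩
  · rw [← norm_inclusionJ z, hz]
    exact (mem_closedBall_zero_iff (E := StrongDual ℝ (StrongDual ℝ X))).mp hwK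
  · show inclusionInDoubleDual ℝ X z f = 1
    rw [hz]
    exact hwf1

/-- If the dual is rotund with Kadets–Klee and `X` is reflexive, a sequence of unit
functionals whose values at a unit vector `x` tend to `1` converges in norm to a norming
functional for `x`. -/
lemma dual_seq_tendsto (hrefl : Function.Surjective (inclusionInDoubleDual ℝ X))
    (hrot' : Rotund (StrongDual ℝ X)) (hkk' : KadetsKlee (StrongDual ℝ X))
    (x : X) (hx : ‖x‖ = 1) (fs : ℕ → StrongDual ℝ X) (hfs : ∀ n, ‖fs n‖ = 1)
    (h1 : Tendsto (fun n => fs n x) atTop (𝓝 1)) :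
    ∃ f : StrongDual ℝ X, ‖f‖ = 1 ∧ f x = 1 ∧ Tendsto fs atTop (𝓝 f) := by
  have hx0 : x ≠ 0 := by
    intro h; rw [h, norm_zero] at hx; norm_num at hx
  obtain ⟨f, hf1, hfx⟩ := exists_dual_vector ℝ x (norm_ne_zero_iff.mpr hx0)
  rw [hx] at hfx
  rw [show ((1:ℝ):ℝ) = 1 from rfl] at hfx
  simp only [RCLike.ofReal_real_eq_id, id] at hfx
  have hJx : ‖inclusionInDoubleDual ℝ X x‖ = 1 := by rw [norm_inclusionJ, hx]
  have huniq : ∀ h : StrongDual ℝ X, ‖h‖ ≤ 1 → h x = 1 → h = f := by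
    intro h hh1 hh2
    exact hrot' (inclusionInDoubleDual ℝ X x) hJx ⟨hh1, hh2⟩ ⟨hf1.le, hfx⟩
  have hweak := weakStar_tendsto x f huniq fs (fun n => (hfs n).le) h1
  refine ⟨f, hf1, hfx, ?_⟩
  apply hkk'
  · intro F
    obtain ⟨y, rfl⟩ := hrefl F
    exact hweak y
  · simp only [hfs, hf1]
    exact tendsto_const_nhds

/-- If `X` is reflexive, rotund with Kadets–Klee, a sequence of unit vectors whose values
under a unit functional `f` tend to `1` converges in norm to the face element of `f`. -/
lemma primal_seq_tendsto (hrefl : Function.Surjective (inclusionInDoubleDual ℝ X))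
    (hrot : Rotund X) (hkk : KadetsKlee X)
    (f : StrongDual ℝ X) (hf : ‖f‖ = 1) (x : X) (hxf : x ∈ face X f)
    (xs : ℕ → X) (hxs : ∀ n, ‖xs n‖ = 1)
    (h1 : Tendsto (fun n => f (xs n)) atTop (𝓝 1)) :
    Tendsto xs atTop (𝓝 x) := by
  have hx1 : ‖x‖ = 1 := by
    refine le_antisymm hxf.1 ?_
    have h2 : ‖f x‖ ≤ ‖f‖ * ‖x‖ := f.le_opNorm x
    rw [hxf.2, hf, one_mul] at h2
    simpa using h2
  have huniq : ∀ h : StrongDual ℝ (StrongDual ℝ X), ‖h‖ ≤ 1 → h f = 1 → h = inclusionInDoubleDual ℝ X x := by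
    intro h hh1 hh2
    obtain ⟨z, rfl⟩ := hrefl h
    rw [norm_inclusionJ] at hh1
    have hzx : z = x := hrot f hf ⟨hh1, hh2⟩ hxf
    rw [hzx]
  have hweak := weakStar_tendsto (E := StrongDual ℝ X) f (inclusionInDoubleDual ℝ X x) huniq
      (fun n => inclusionInDoubleDual ℝ X (xs n))
      (fun n => by rw [norm_inclusionJ]; exact (hxs n).le) h1
  apply hkk
  · intro g
    exact hweak g
  · rw [hx1]
    simp only [hxs]
    exact tendsto_const_nhds

end Main

theorem lur_of_stronglyRotund_dual (X : Type*) [NormedAddCommGroup X] [NormedSpace ℝ X]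
    [CompleteSpace X] (hX : StronglyRotund X) (hX' : StronglyRotund (StrongDual ℝ X)) :
    LUR X ∧ LUR (StrongDual ℝ X) := by
  obtain ⟨hXr, hXrot, hXkk⟩ := hX
  obtain ⟨hX'r, hX'rot, hX'kk⟩ := hX'
  constructor
  · -- LUR X
    intro x hx xs hxs hsum
    have hXnt : Nontrivial X := by
      refine ⟨x, 0, ?_⟩
      intro h; rw [h, norm_zero] at hx; norm_num at hx
    choose fs hfs1 hfs2 using fun n => exists_dual_vector' ℝ (xs n + x)
    have hsum' : Tendsto (fun n => fs n (xs n) + fs n x) atTop (𝓝 2) := by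
      have : (fun n => fs n (xs n) + fs n x) = fun n => ‖xs n + x‖ := by
        funext n
        rw [← map_add, hfs2 n]
        simp [RCLike.ofReal_real_eq_id]
      rw [this]
      exact hsum
    have hbx : ∀ n, fs n x ≤ 1 := fun n => apply_le_one_of_le (hfs1 n).le hx.le
    have hbxs : ∀ n, fs n (xs n) ≤ 1 := fun n => apply_le_one_of_le (hfs1 n).le (hxs n).le
    have hfx : Tendsto (fun n => fs n x) atTop (𝓝 1) := by
      refine tendsto_one_of_sum hbx hbxs ?_
      simpa [add_comm] using hsum'
    have hfxn : Tendsto (fun n => fs n (xs n)) atTop (𝓝 1) :=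
      tendsto_one_of_sum hbxs hbx hsum'
    obtain ⟨f, hf1, hfx1, hftend⟩ := dual_seq_tendsto hXr hX'rot hX'kk x hx fs hfs1 hfx
    have hfxs : Tendsto (fun n => f (xs n)) atTop (𝓝 1) := by
      have hdiff : Tendsto (fun n => (f - fs n) (xs n)) atTop (𝓝 0) := by
        refine squeeze_zero_norm (a := fun n => ‖f - fs n‖) (fun n => ?_) ?_
        · calc ‖(f - fs n) (xs n)‖ ≤ ‖f - fs n‖ * ‖xs n‖ := (f - fs n).le_opNorm (xs n)
            _ = ‖f - fs n‖ := by rw [hxs n, mul_one]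
        · have h := (tendsto_const_nhds (x := f) (f := atTop (α := ℕ))).sub hftend
          rw [sub_self] at h
          simpa using h.norm
      have hcomb := hfxn.add hdiff
      simp only [ContinuousLinearMap.sub_apply] at hcomb
      have : (fun n => fs n (xs n) + (f (xs n) - fs n (xs n))) = fun n => f (xs n) := by
        funext n; ring
      rw [this] at hcomb
      simpa using hcomb
    exact primal_seq_tendsto hXr hXrot hXkk f hf1 x ⟨hx.le, hfx1⟩ xs hxs hfxs
  · -- LUR (StrongDual ℝ X)
    intro f hf fs hfs hsum
    have hDnt : Nontrivial (StrongDual ℝ X) := by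
      refine ⟨f, 0, ?_⟩
      intro h; rw [h, norm_zero] at hf; norm_num at hf
    choose Gs hGs1 hGs2 using fun n => exists_dual_vector' ℝ (fs n + f)
    choose xs hxsJ using fun n => hXr (Gs n)
    have hxsn : ∀ n, ‖xs n‖ = 1 := fun n => by rw [← norm_inclusionJ, hxsJ n, hGs1 n]
    have hsum' : Tendsto (fun n => fs n (xs n) + f (xs n)) atTop (𝓝 2) := by
      have : (fun n => fs n (xs n) + f (xs n)) = fun n => ‖fs n + f‖ := by
        funext n
        have : Gs n (fs n + f) = fs n (xs n) + f (xs n) := by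
          rw [← hxsJ n]
          simp
        rw [← this, hGs2 n]
        simp [RCLike.ofReal_real_eq_id]
      rw [this]
      exact hsum
    have hbf : ∀ n, f (xs n) ≤ 1 := fun n => apply_le_one_of_le hf.le (hxsn n).le
    have hbfs : ∀ n, fs n (xs n) ≤ 1 := fun n => apply_le_one_of_le (hfs n).le (hxsn n).le
    have hfx : Tendsto (fun n => f (xs n)) atTop (𝓝 1) := by
      refine tendsto_one_of_sum hbf hbfs ?_
      simpa [add_comm] using hsum'
    have hfsx : Tendsto (fun n => fs n (xs n)) atTop (𝓝 1) :=
      tendsto_one_of_sum hbfs hbf hsum'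
    obtain ⟨x, hxmem⟩ := exists_face_elem hXr f hf
    have hx1 : ‖x‖ = 1 := by
      refine le_antisymm hxmem.1 ?_
      have h2 : ‖f x‖ ≤ ‖f‖ * ‖x‖ := f.le_opNorm x
      rw [hxmem.2, hf, one_mul] at h2
      simpa using h2
    have hxx : Tendsto xs atTop (𝓝 x) := primal_seq_tendsto hXr hXrot hXkk f hf x hxmem xs hxsn hfx
    have hfsx2 : Tendsto (fun n => fs n x) atTop (𝓝 1) := by
      have hdiff : Tendsto (fun n => fs n (x - xs n)) atTop (𝓝 0) := by
        refine squeeze_zero_norm (a := fun n => ‖x - xs n‖) (fun n => ?_) ?_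
        · calc ‖fs n (x - xs n)‖ ≤ ‖fs n‖ * ‖x - xs n‖ := (fs n).le_opNorm _
            _ = ‖x - xs n‖ := by rw [hfs n, one_mul]
        · have : Tendsto (fun n => x - xs n) atTop (𝓝 0) := by
            simpa using (tendsto_const_nhds (x := x)).sub hxx
          simpa using this.norm
      have hcomb := hfsx.add hdiff
      simp only [map_sub] at hcomb
      have : (fun n => fs n (xs n) + (fs n x - fs n (xs n))) = fun n => fs n x := by
        funext n; ring
      rw [this] at hcomb
      simpa using hcomb
    obtain ⟨g, hg1, hgx, hgtend⟩ := dual_seq_tendsto hXr hX'rot hX'kk x hx1 fs hfs hfsx2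
    have hfx1 : f x = 1 := by
      have hfc : Tendsto (fun n => f (xs n)) atTop (𝓝 (f x)) :=
        (f.continuous.tendsto x).comp hxx
      exact tendsto_nhds_unique hfc hfx
    have hJx1 : ‖inclusionInDoubleDual ℝ X x‖ = 1 := by rw [norm_inclusionJ, hx1]
    have hfg : f = g := hX'rot (inclusionInDoubleDual ℝ X x) hJx1 ⟨hf.le, hfx1⟩ ⟨hg1.le, hgx⟩
    rw [hfg]
    exact hgtend
end
end

section
/- If a Banach space X is smooth and CLUR, then X is HLUR. -/
open Metric Filter Topology NormedSpace

noncomputable section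

/-! A limit point `z` of a subsequence of `xs`, which exists by CLUR, satisfies `‖z + x‖ = 2`, so a
functional norming `z + x` norms `x` as well as `z`. By smoothness that functional is `f`, so `z` lies
in the face of `f`, and the subsequence approaches the face. -/

theorem exists_norm_one_apply_eq_one_of_norm_add_eq_two {X : Type*} [NormedAddCommGroup X]
    [NormedSpace ℝ X] {x z : X} (hx : ‖x‖ ≤ 1) (hz : ‖z‖ ≤ 1) (hzx : ‖z + x‖ = 2) :
    ∃ g : X →L[ℝ] ℝ, ‖g‖ = 1 ∧ g x = 1 ∧ g z = 1 := by
  obtain ⟨g, hg, hgzx⟩ := exists_dual_vector ℝ (z + x) (by rw [hzx]; norm_num)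
  have apply_le_one (y : X) (hy : ‖y‖ ≤ 1) : g y ≤ 1 := calc
    g y ≤ ‖g‖ * ‖y‖ := (le_abs_self _).trans (g.le_opNorm y)
    _ ≤ 1 := by rw [hg, one_mul]; exact hy
  have hsum : g z + g x = 2 := by rw [← map_add, hgzx, hzx]; norm_num
  exact ⟨g, hg, by linarith [apply_le_one x hx, apply_le_one z hz],
    by linarith [apply_le_one x hx, apply_le_one z hz]⟩

theorem SmoothSpace.mem_face_of_norm_add_eq_two {X : Type*} [NormedAddCommGroup X]
    [NormedSpace ℝ X] (hsm : SmoothSpace X) {x z : X} (hx : ‖x‖ = 1) (hz : ‖z‖ ≤ 1)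
    (hzx : ‖z + x‖ = 2) {f : X →L[ℝ] ℝ} (hf : ‖f‖ = 1) (hfx : f x = 1) : z ∈ face X f := by
  obtain ⟨g, hg, hgx, hgz⟩ := exists_norm_one_apply_eq_one_of_norm_add_eq_two hx.le hz hzx
  rw [(hsm x hx).unique ⟨hf, hfx⟩ ⟨hg, hgx⟩]
  exact ⟨hz, hgz⟩

theorem hlur_of_smooth_clur_general (X : Type*) [NormedAddCommGroup X] [NormedSpace ℝ X]
    (hsm : SmoothSpace X) (hcl : CLUR X) : HLUR X := by
  intro x hx xs hxs hsum f hf hfx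
  refine tendsto_of_subseq_tendsto fun ns hns => ?_
  obtain ⟨φ, hφ, z, hz⟩ := hcl x hx (xs ∘ ns) (fun n => hxs _) (hsum.comp hns)
  have hz1 : ‖z‖ ≤ 1 := le_of_tendsto' hz.norm fun n => (hxs _).le
  have hzx : ‖z + x‖ = 2 :=
    tendsto_nhds_unique (hz.add_const x).norm (hsum.comp (hns.comp hφ.tendsto_atTop))
  have hzf : z ∈ face X f := hsm.mem_face_of_norm_add_eq_two hx hz1 hzx hf hfx
  refine ⟨φ, ?_⟩
  simpa [Function.comp_def, infDist_zero_of_mem hzf] using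
    ((continuous_infDist_pt (face X f)).tendsto z).comp hz

theorem hlur_of_smooth_clur (X : Type*) [NormedAddCommGroup X] [NormedSpace ℝ X]
    [CompleteSpace X] (hsm : SmoothSpace X) (hcl : CLUR X) : HLUR X :=
  hlur_of_smooth_clur_general X hsm hcl
end
end

section
/- If a Banach space X is ACS and CLUR, then X is HLUR. -/
open Metric Filter Topology NormedSpace

noncomputable section

/-!
By CLUR, every subsequence of `xs` has a further subsequence converging to some `z`. Such a limit
is a unit vector with `‖x + z‖ = 2`, so ACS puts `z` on the face of any `f` norming `x`, and the
distance from `xs` to that face tends to `0` along the subsequence.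
-/

theorem ACS.mem_face_of_tendsto {X : Type*} [NormedAddCommGroup X] [NormedSpace ℝ X]
    (hacs : ACS X) {x z : X} (hx : ‖x‖ = 1) {xs : ℕ → X} (hxs : ∀ n, ‖xs n‖ = 1)
    (hsum : Tendsto (fun n => ‖xs n + x‖) atTop (𝓝 2)) (hz : Tendsto xs atTop (𝓝 z))
    {f : X →L[ℝ] ℝ} (hf : ‖f‖ = 1) (hfx : f x = 1) : z ∈ face X f := by
  have hz_norm : ‖z‖ = 1 :=
    tendsto_nhds_unique hz.norm (by simp only [hxs]; exact tendsto_const_nhds)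
  have hxz : ‖x + z‖ = 2 := by
    rw [add_comm]
    exact tendsto_nhds_unique (hz.add_const x).norm hsum
  exact ⟨hz_norm.le, hacs x z hx hz_norm f hf hxz hfx⟩

theorem hlur_of_acs_clur_general (X : Type*) [NormedAddCommGroup X] [NormedSpace ℝ X]
    (hacs : ACS X) (hcl : CLUR X) : HLUR X := by
  intro x hx xs hxs hsum f hf hfx
  refine tendsto_of_subseq_tendsto fun ns hns => ?_
  obtain ⟨φ, hφ, z, hz⟩ := hcl x hx (xs ∘ ns) (fun n => hxs (ns n)) (hsum.comp hns)
  have hz_face : z ∈ face X f :=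
    hacs.mem_face_of_tendsto hx (fun n => hxs (ns (φ n)))
      (hsum.comp (hns.comp hφ.tendsto_atTop)) hz hf hfx
  refine ⟨φ, ?_⟩
  simpa only [infDist_zero_of_mem hz_face, Function.comp_def] using
    ((continuous_infDist_pt (face X f)).tendsto z).comp hz

theorem hlur_of_acs_clur (X : Type*) [NormedAddCommGroup X] [NormedSpace ℝ X]
    [CompleteSpace X] (hacs : ACS X) (hcl : CLUR X) : HLUR X :=
  hlur_of_acs_clur_general X hacs hcl
end
end

section
/- Let X be an HLUR Banach space and let Y be a proximinal closed subspace of X. Then the quotient space X/Y is HLUR. -/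
open Metric Filter Topology NormedSpace

noncomputable section

/-! Proximinality lets every point of `X ⧸ Y` be lifted to a preimage of the same norm. Lifting
the data, HLUR of `X` applied to `f ∘ Q` puts the lifted sequence close to the face of `f ∘ Q`,
and the `1`-Lipschitz map `Q` sends that face into the face of `f`. -/

namespace Submodule

variable {X : Type*} [NormedAddCommGroup X] [NormedSpace ℝ X] (Y : Submodule ℝ X)

lemma lipschitzWith_one_mkQL : LipschitzWith 1 Y.mkQL :=
  LipschitzWith.mk_one fun a b => by
    rw [dist_eq_norm, dist_eq_norm, ← map_sub]
    exact Quotient.norm_mk_le Y (a - b)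

lemma norm_comp_mkQL_le (f : X ⧸ Y →L[ℝ] ℝ) : ‖f.comp Y.mkQL‖ ≤ ‖f‖ :=
  ContinuousLinearMap.opNorm_le_bound _ (norm_nonneg f) fun v =>
    (f.le_opNorm _).trans (mul_le_mul_of_nonneg_left (Quotient.norm_mk_le Y v) (norm_nonneg f))

lemma mapsTo_mkQL_face [IsClosed (Y : Set X)] (f : X ⧸ Y →L[ℝ] ℝ) :
    Set.MapsTo Y.mkQL (face X (f.comp Y.mkQL)) (face (X ⧸ Y) f) :=
  fun _ hw => ⟨(Quotient.norm_mk_le Y _).trans hw.1, hw.2⟩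

variable {Y}

lemma exists_mk_eq_and_norm_eq (hprox : ∀ x : X, ∃ y ∈ Y, ‖x - y‖ = infDist x (Y : Set X))
    (v : X ⧸ Y) : ∃ w : X, Quotient.mk w = v ∧ ‖w‖ = ‖v‖ := by
  obtain ⟨z, rfl⟩ := Quotient.mk_surjective Y v
  obtain ⟨y, hy, hzy⟩ := hprox z
  refine ⟨z - y, ?_, ?_⟩
  · rw [Quotient.mk_sub, (Quotient.mk_eq_zero Y).mpr hy, sub_zero]
  · have : ‖(Quotient.mk z : X ⧸ Y)‖ = infDist z Y := QuotientAddGroup.norm_mk z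
    rw [hzy, this]

end Submodule

lemma Metric.infDist_le_infDist_of_mapsTo {α β : Type*} [PseudoMetricSpace α]
    [PseudoMetricSpace β] {φ : α → β} {s : Set α} {t : Set β} (hφ : LipschitzWith 1 φ)
    (hst : Set.MapsTo φ s t) (hs : s.Nonempty) (a : α) : infDist (φ a) t ≤ infDist a s :=
  (le_infDist hs).2 fun _ hy =>
    (infDist_le_dist_of_mem (hst hy)).trans (by simpa using hφ.dist_le_mul a _)

lemma ContinuousLinearMap.norm_eq_one_of_apply_eq_one {E : Type*}
    [SeminormedAddCommGroup E] [NormedSpace ℝ E] {g : E →L[ℝ] ℝ} (hg : ‖g‖ ≤ 1)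
    {x : E} (hx : ‖x‖ = 1) (hgx : g x = 1) : ‖g‖ = 1 :=
  le_antisymm hg <| by simpa [hgx, hx] using g.le_opNorm x

theorem hlur_quotient_general (X : Type*) [NormedAddCommGroup X] [NormedSpace ℝ X]
    (Y : Submodule ℝ X) [IsClosed (Y : Set X)]
    (hprox : ∀ x : X, ∃ y ∈ Y, ‖x - y‖ = infDist x (Y : Set X))
    (hX : HLUR X) : HLUR (X ⧸ Y) := by
  intro xb hxb xsb hxsb hsum f hf hfx
  obtain ⟨x, rfl, hx⟩ := Submodule.exists_mk_eq_and_norm_eq hprox xb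
  choose xs hxs_mk hxs using fun n => Submodule.exists_mk_eq_and_norm_eq hprox (xsb n)
  obtain rfl : xsb = fun n => Submodule.Quotient.mk (xs n) := funext fun n => (hxs_mk n).symm
  rw [hxb] at hx
  simp only [hxsb] at hxs
  have hsum_lift : Tendsto (fun n => ‖xs n + x‖) atTop (𝓝 2) :=
    tendsto_of_tendsto_of_tendsto_of_le_of_le hsum tendsto_const_nhds
      (fun n => by
        simpa only [← Submodule.Quotient.mk_add] using Submodule.Quotient.norm_mk_le Y _)
      (fun n => (norm_add_le _ _).trans (by rw [hxs, hx]; norm_num))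
  have hg : ‖f.comp Y.mkQL‖ = 1 :=
    ContinuousLinearMap.norm_eq_one_of_apply_eq_one (hf ▸ Y.norm_comp_mkQL_le f) hx hfx
  refine squeeze_zero (fun _ => infDist_nonneg) (fun n => ?_) (hX x hx xs hxs hsum_lift _ hg hfx)
  exact infDist_le_infDist_of_mapsTo Y.lipschitzWith_one_mkQL (Y.mapsTo_mkQL_face f)
    ⟨x, hx.le, hfx⟩ (xs n)

theorem hlur_quotient (X : Type*) [NormedAddCommGroup X] [NormedSpace ℝ X]
    [CompleteSpace X] (Y : Submodule ℝ X) [IsClosed (Y : Set X)]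
    (hprox : ∀ x : X, ∃ y ∈ Y, ‖x - y‖ = infDist x (Y : Set X))
    (hX : HLUR X) : HLUR (X ⧸ Y) :=
  hlur_quotient_general X Y hprox hX
end
end

section
/- If a Banach space X is HLUR and nearly strictly convex, then X is CLUR. -/
open Metric Filter Topology NormedSpace

noncomputable section

theorem IsCompact.tendsto_subseq_of_infDist_tendsto_zero {α : Type*} [PseudoMetricSpace α]
    {K : Set α} (hK : IsCompact K) (hne : K.Nonempty) {u : ℕ → α}
    (hu : Tendsto (fun n => infDist (u n) K) atTop (𝓝 0)) :
    ∃ φ : ℕ → ℕ, StrictMono φ ∧ ∃ z : α, Tendsto (u ∘ φ) atTop (𝓝 z) := by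
  choose y hyK hy using fun n => hK.exists_infDist_eq_dist hne (u n)
  obtain ⟨z, -, φ, hφ, hyz⟩ := hK.tendsto_subseq hyK
  have hdist : Tendsto (fun n => dist (y (φ n)) (u (φ n))) atTop (𝓝 0) := by
    simpa only [Function.comp_def, dist_comm, ← hy] using hu.comp hφ.tendsto_atTop
  exact ⟨φ, hφ, z, hyz.congr_dist hdist⟩

theorem exists_norm_eq_one_and_mem_face {X : Type*} [NormedAddCommGroup X] [NormedSpace ℝ X]
    {x : X} (hx : ‖x‖ = 1) : ∃ f : X →L[ℝ] ℝ, ‖f‖ = 1 ∧ x ∈ face X f := by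
  obtain ⟨f, hf, hfx⟩ := exists_dual_vector ℝ x (by simp [hx])
  exact ⟨f, hf, hx.le, by rw [hfx, hx, RCLike.ofReal_one]⟩

theorem clur_of_hlur_nsc_general (X : Type*) [NormedAddCommGroup X] [NormedSpace ℝ X]
    (hX : HLUR X) (hnsc : NSC X) : CLUR X := by
  intro x hx xs hxs hlim
  obtain ⟨f, hf, hxf⟩ := exists_norm_eq_one_and_mem_face hx
  exact (hnsc f hf).tendsto_subseq_of_infDist_tendsto_zero ⟨x, hxf⟩
    (hX x hx xs hxs hlim f hf hxf.2)

theorem clur_of_hlur_nsc (X : Type*) [NormedAddCommGroup X] [NormedSpace ℝ X]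
    [CompleteSpace X] (hX : HLUR X) (hnsc : NSC X) : CLUR X :=
  clur_of_hlur_nsc_general X hX hnsc
end
end
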